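/- Let (u^n)_{n≥0} (with u^{−1} = u^0) be generated by the algorithm with û^n = u^n: y^n satisfies ∇H^n(y^n) − ∇F^n(u^n) + M(y^n − u^n) = 0, d^n = y^n − u^n, λ_n ≥ 0 satisfies E^n(y^n + λ_n d^n) ≤ E^n(y^n) − α λ_n ‖d^n‖² with α > 0, and u^{n+1} = y^n + λ_n d^n. Assume h and f are Lipschitz continuous, E is bounded below, and λ_max := sup_n λ_n < √(4/(3 δt L) − 1/2) − 1. Then lim_{n→∞} ‖∇A(u^{n+1}, u^n)‖ = 0, where A(x,y) = E(x) + (L/2 + 1/(3δt))‖x − y‖². -/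

import Mathlib

/-!
Write `dⁿ = yⁿ - uⁿ`. The first-order convexity inequality for `H`, the descent lemma for `F` and
the stationarity of `yⁿ` (with `M ⪰ 0`) give `Eⁿ(yⁿ) ≤ Eⁿ(uⁿ) - (4/(3δt) - L/2)‖dⁿ‖²`, and the line
search keeps this for `uⁿ⁺¹`. Unfolding `Eⁿ` and bounding the cross terms by Cauchy–Schwarz, the
Lipschitz bound on `f` and AM–GM turns it into the decrease
`A(uⁿ⁺¹, uⁿ) + κ‖dⁿ‖² ≤ A(uⁿ, uⁿ⁻¹)` with `κ = 4/(3δt) - L/2 - L(1 + λ_max)²`, which is positive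
exactly by the bound on `λ_max`. As `A ≥ inf E`, this forces `dⁿ → 0`, hence `uⁿ⁺¹ - uⁿ → 0`.
Finally the stationarity equation writes `∇E(uⁿ⁺¹)` as a combination of differences of iterates and
of `h`, `f`, `M` applied to them, all of which tend to zero, and `∇A(uⁿ⁺¹, uⁿ)` differs from
`(∇E(uⁿ⁺¹), 0)` by multiples of `uⁿ⁺¹ - uⁿ`.
-/

open scoped RealInnerProductSpace
open Filter Topology InnerProductSpace

theorem WithLp.prod_norm_le_add {p : ENNReal} [Fact (1 ≤ p)] {α β : Type*}
    [SeminormedAddCommGroup α] [SeminormedAddCommGroup β] (x : WithLp p (α × β)) :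
    ‖x‖ ≤ ‖x.fst‖ + ‖x.snd‖ := by
  have hx : x = WithLp.toLp p (x.fst, 0) + WithLp.toLp p (0, x.snd) := by
    rw [← WithLp.toLp_add, Prod.mk_add_mk, add_zero, zero_add]; rfl
  calc ‖x‖ ≤ ‖WithLp.toLp p (x.fst, (0 : β))‖ + ‖WithLp.toLp p ((0 : α), x.snd)‖ := by
        conv_lhs => rw [hx]
        exact norm_add_le _ _
    _ = ‖x.fst‖ + ‖x.snd‖ := by rw [WithLp.norm_toLp_fst, WithLp.norm_toLp_snd]

theorem tendsto_zero_of_add_mul_sq_le {a r : ℕ → ℝ} {κ : ℝ} (hκ : 0 < κ)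
    (hdec : ∀ n, a (n + 1) + κ * r n ^ 2 ≤ a n) (hbdd : BddBelow (Set.range a)) :
    Tendsto r atTop (𝓝 0) := by
  have hanti : Antitone a := antitone_nat_of_succ_le fun n => by
    nlinarith [hdec n, mul_nonneg hκ.le (sq_nonneg (r n))]
  have hlim := tendsto_atTop_ciInf hanti hbdd
  have hgap : Tendsto (fun n => (a n - a (n + 1)) / κ) atTop (𝓝 0) := by
    simpa using (hlim.sub (hlim.comp (tendsto_add_atTop_nat 1))).div_const κ
  have hsq : Tendsto (fun n => r n ^ 2) atTop (𝓝 0) :=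
    squeeze_zero (fun n => sq_nonneg _)
      (fun n => (le_div_iff₀ hκ).2 (by linarith [hdec n])) hgap
  rw [tendsto_zero_iff_abs_tendsto_zero]
  simpa [Function.comp_def, Real.sqrt_sq_eq_abs] using hsq.sqrt

theorem tendsto_norm_smul_zero {ι E : Type*} [SeminormedAddCommGroup E] [NormedSpace ℝ E]
    {l : Filter ι} {c : ι → ℝ} {v : ι → E} {C : ℝ} (hc₀ : ∀ i, 0 ≤ c i) (hcC : ∀ i, c i ≤ C)
    (hv : Tendsto (fun i => ‖v i‖) l (𝓝 0)) : Tendsto (fun i => ‖c i • v i‖) l (𝓝 0) :=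
  squeeze_zero (g := fun i => C * ‖v i‖) (fun i => norm_nonneg _)
    (fun i => by
      rw [norm_smul, Real.norm_of_nonneg (hc₀ i)]
      exact mul_le_mul_of_nonneg_right (hcC i) (norm_nonneg _))
    (by simpa using hv.const_mul C)

section Calculus

variable {X : Type*} [NormedAddCommGroup X] [InnerProductSpace ℝ X] [CompleteSpace X]
  {φ ψ : X → ℝ} {g g' x : X}

theorem HasGradientAt.of_hasFDerivAt {D : X →L[ℝ] ℝ} (hD : HasFDerivAt φ D x)
    (hg : ∀ w, D w = ⟪g, w⟫) : HasGradientAt φ g x := by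
  rw [hasGradientAt_iff_hasFDerivAt]
  exact hD.congr_fderiv (ContinuousLinearMap.ext fun w => (hg w).trans toDual_apply_apply.symm)

theorem HasGradientAt.add (hφ : HasGradientAt φ g x) (hψ : HasGradientAt ψ g' x) :
    HasGradientAt (fun v => φ v + ψ v) (g + g') x :=
  .of_hasFDerivAt (hφ.hasFDerivAt.add hψ.hasFDerivAt) fun w => by simp [inner_add_left]

theorem HasGradientAt.sub (hφ : HasGradientAt φ g x) (hψ : HasGradientAt ψ g' x) :
    HasGradientAt (fun v => φ v - ψ v) (g - g') x :=
  .of_hasFDerivAt (hφ.hasFDerivAt.sub hψ.hasFDerivAt) fun w => by simp [inner_sub_left]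

theorem HasGradientAt.const_mul (c : ℝ) (hφ : HasGradientAt φ g x) :
    HasGradientAt (fun v => c * φ v) (c • g) x :=
  .of_hasFDerivAt (hφ.hasFDerivAt.const_mul c) fun w => by simp [real_inner_smul_left]

theorem hasGradientAt_inner_sub (b a x : X) : HasGradientAt (fun v => ⟪b, v - a⟫) b x :=
  .of_hasFDerivAt ((hasFDerivAt_const b x).inner ℝ ((hasFDerivAt_id x).sub_const a)) fun w => by
    simp

theorem hasGradientAt_norm_sub_sq (a x : X) :
    HasGradientAt (fun v => ‖v - a‖ ^ 2) ((2 : ℝ) • (x - a)) x :=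
  .of_hasFDerivAt ((hasFDerivAt_id x).sub_const a).norm_sq fun w => by
    simp [real_inner_smul_left, inner_sub_left]

theorem HasGradientAt.hasDerivAt_comp_add_smul {F : X → ℝ} {g v d : X} {t : ℝ}
    (hF : HasGradientAt F g (v + t • d)) :
    HasDerivAt (fun s : ℝ => F (v + s • d)) ⟪g, d⟫ t := by
  have hline : HasDerivAt (fun s : ℝ => v + s • d) d t := by
    simpa using ((hasDerivAt_id t).smul_const d).const_add v
  exact hF.hasFDerivAt.comp_hasDerivAt t hline

theorem ConvexOn.add_inner_le_of_hasGradientAt {H : X → ℝ} {g v : X}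
    (hH : ConvexOn ℝ Set.univ H) (hg : HasGradientAt H g v) (w : X) :
    H v + ⟪g, w - v⟫ ≤ H w := by
  have hline : ConvexOn ℝ Set.univ fun s : ℝ => H (v + s • (w - v)) := by
    simpa [Function.comp_def, AffineMap.lineMap_apply_module', add_comm]
      using hH.comp_affineMap (AffineMap.lineMap v w : ℝ →ᵃ[ℝ] X)
  have hslope := hline.le_slope_of_hasDerivAt (Set.mem_univ 0) (Set.mem_univ 1) one_pos
    (by simpa using hg : HasGradientAt H g (v + (0 : ℝ) • (w - v))).hasDerivAt_comp_add_smul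
  simp only [slope_def_field, one_smul, zero_smul, add_zero, add_sub_cancel, sub_zero,
    div_one] at hslope
  linarith

theorem le_add_inner_add_sq_of_lipschitz_gradient {F : X → ℝ} {f : X → X} {L : ℝ}
    (hF : ∀ x, HasGradientAt F (f x) x) (hLip : ∀ x y, ‖f x - f y‖ ≤ L * ‖x - y‖) (v w : X) :
    F w ≤ F v + ⟪f v, w - v⟫ + L / 2 * ‖w - v‖ ^ 2 := by
  set φ : ℝ → ℝ := fun t => F (v + t • (w - v)) - t * ⟪f v, w - v⟫ - L / 2 * t ^ 2 * ‖w - v‖ ^ 2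
  have hφ : ∀ t, HasDerivAt φ
      (⟪f (v + t • (w - v)), w - v⟫ - ⟪f v, w - v⟫ - L * t * ‖w - v‖ ^ 2) t := fun t =>
    ((((hF _).hasDerivAt_comp_add_smul).sub ((hasDerivAt_id t).mul_const _)).sub
      (((hasDerivAt_pow 2 t).const_mul (L / 2)).mul_const _)).congr_deriv (by push_cast; ring)
  have hanti : AntitoneOn φ (Set.Icc 0 1) := by
    refine antitoneOn_of_hasDerivWithinAt_nonpos (convex_Icc 0 1)
      (HasDerivAt.continuousOn fun t _ => hφ t) (fun t _ => (hφ t).hasDerivWithinAt) ?_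
    intro t ht
    rw [interior_Icc] at ht
    have hcs := real_inner_le_norm (f (v + t • (w - v)) - f v) (w - v)
    have hlip : ‖f (v + t • (w - v)) - f v‖ ≤ L * (t * ‖w - v‖) := by
      simpa [norm_smul, abs_of_pos ht.1] using hLip (v + t • (w - v)) v
    rw [inner_sub_left] at hcs
    nlinarith [norm_nonneg (w - v)]
  have h01 : φ 1 ≤ φ 0 := hanti (by simp) (by simp) zero_le_one
  simp only [φ, one_smul, zero_smul, add_zero, add_sub_cancel] at h01
  linarith

theorem hasGradientAt_fst_add_norm_fst_sub_snd_sq {E : X → ℝ} {g x₁ : X}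
    (hE : HasGradientAt E g x₁) (c : ℝ) (x₂ : X) :
    HasGradientAt (fun p : WithLp 2 (X × X) => E p.fst + c * ‖p.fst - p.snd‖ ^ 2)
      (WithLp.toLp 2 (g + (2 * c) • (x₁ - x₂), -((2 * c) • (x₁ - x₂))))
      (WithLp.toLp 2 (x₁, x₂)) := by
  have hfst := (WithLp.fstL 2 ℝ X X).hasFDerivAt (x := WithLp.toLp 2 (x₁, x₂))
  have hdiff := (WithLp.fstL 2 ℝ X X - WithLp.sndL 2 ℝ X X).hasFDerivAt
    (x := WithLp.toLp 2 (x₁, x₂))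
  refine .of_hasFDerivAt ((hE.hasFDerivAt.comp _ hfst).add (hdiff.norm_sq.const_mul c)) ?_
  intro w
  simp only [sub_apply, WithLp.fstL_apply, WithLp.toLp_fst, WithLp.sndL_apply, WithLp.toLp_snd,
    map_sub, ContinuousLinearMap.comp_sub, ContinuousLinearMap.sub_comp, add_apply,
    ContinuousLinearMap.comp_apply, toDual_apply_apply, smul_apply, coe_innerSL_apply,
    nsmul_eq_mul, Nat.cast_ofNat, smul_eq_mul, WithLp.prod_inner_apply, WithLp.ofLp_fst,
    inner_add_left, real_inner_smul_left, inner_sub_left, WithLp.ofLp_snd, inner_neg_left]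
  ring

theorem norm_gradient_fst_add_norm_fst_sub_snd_sq_le {E : X → ℝ} {g x₁ : X}
    (hE : HasGradientAt E g x₁) {c : ℝ} (hc : 0 ≤ c) (x₂ : X) :
    ‖gradient (fun p : WithLp 2 (X × X) => E p.fst + c * ‖p.fst - p.snd‖ ^ 2)
      (WithLp.toLp 2 (x₁, x₂))‖ ≤ ‖g‖ + 4 * c * ‖x₁ - x₂‖ := by
  rw [(hasGradientAt_fst_add_norm_fst_sub_snd_sq hE c x₂).gradient]
  refine (WithLp.prod_norm_le_add _).trans ?_
  have hsmul : ‖(2 * c) • (x₁ - x₂)‖ = 2 * c * ‖x₁ - x₂‖ := by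
    rw [norm_smul, Real.norm_of_nonneg (by positivity)]
  have := norm_add_le g ((2 * c) • (x₁ - x₂))
  simp only [WithLp.toLp_fst, WithLp.toLp_snd, norm_neg]
  linarith

end Calculus

section Splitting

variable {X : Type*} [NormedAddCommGroup X] [InnerProductSpace ℝ X]

theorem norm_sub_sq_eq_add_inner (a v w : X) :
    ‖w - a‖ ^ 2 = ‖v - a‖ ^ 2 + 2 * ⟪v - a, w - v⟫ + ‖w - v‖ ^ 2 := by
  rw [← norm_add_sq_real, sub_add_sub_cancel']

/-- The paper's `Hⁿ`, with `τ = δt` and `a = uⁿ`. -/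
noncomputable def splitH (H : X → ℝ) (τ : ℝ) (a v : X) : ℝ := H v + (1 / τ) * ‖v - a‖ ^ 2

/-- The paper's `Fⁿ`, with `τ = δt`, `a = uⁿ` and `b = uⁿ⁻¹`. -/
noncomputable def splitF (F : X → ℝ) (f : X → X) (τ : ℝ) (a b v : X) : ℝ :=
  (1 / (3 * τ)) * ‖v - b‖ ^ 2 - F v - ⟪f a - f b, v - b⟫

variable {H F : X → ℝ} {h f : X → X} {τ L : ℝ}

theorem lyapunov_add_le_of_split_le (hL : 0 ≤ L) (hτ : 0 < τ)
    (hLip : ∀ x y, ‖f x - f y‖ ≤ L * ‖x - y‖) {x₀ x x' : X} {D : ℝ}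
    (hsplit : splitH H τ x x' - splitF F f τ x x₀ x'
      ≤ splitH H τ x x - splitF F f τ x x₀ x - D) :
    H x' + F x' + (L / 2 + 1 / (3 * τ)) * ‖x' - x‖ ^ 2 + D
      ≤ H x + F x + (L / 2 + 1 / (3 * τ)) * ‖x - x₀‖ ^ 2 + L * ‖x' - x‖ ^ 2 := by
  have hlin : ⟪f x - f x₀, x' - x₀⟫ = ⟪f x - f x₀, x - x₀⟫ + ⟪f x - f x₀, x' - x⟫ := by
    rw [← inner_add_right, sub_add_sub_cancel']
  have hcs : ⟪x - x₀, x' - x⟫ ≤ ‖x - x₀‖ * ‖x' - x‖ := real_inner_le_norm _ _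
  have hcsf : -⟪f x - f x₀, x' - x⟫ ≤ L * ‖x - x₀‖ * ‖x' - x‖ :=
    (neg_le_abs _).trans <| (abs_real_inner_le_norm _ _).trans <|
      mul_le_mul_of_nonneg_right (hLip x x₀) (norm_nonneg _)
  have hamgm := two_mul_le_add_sq ‖x - x₀‖ ‖x' - x‖
  have hB : 0 < 1 / (3 * τ) := by positivity
  simp only [splitH, splitF, sub_self, norm_zero, hlin, norm_sub_sq_eq_add_inner x₀ x x'] at hsplit
  rw [show 1 / τ = 3 * (1 / (3 * τ)) by field_simp] at hsplit
  nlinarith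

variable [CompleteSpace X]

theorem hasGradientAt_splitH {g v : X} (hH : HasGradientAt H g v) (τ : ℝ) (a : X) :
    HasGradientAt (splitH H τ a) (g + (2 / τ) • (v - a)) v := by
  have := hH.add ((hasGradientAt_norm_sub_sq a v).const_mul (1 / τ))
  rwa [smul_smul, one_div_mul_eq_div] at this

theorem hasGradientAt_splitF {g v : X} (hF : HasGradientAt F g v) (f : X → X) (τ : ℝ) (a b : X) :
    HasGradientAt (splitF F f τ a b) ((2 / (3 * τ)) • (v - b) - g - (f a - f b)) v := by
  have := (((hasGradientAt_norm_sub_sq b v).const_mul (1 / (3 * τ))).sub hF).sub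
    (hasGradientAt_inner_sub (f a - f b) b v)
  rwa [smul_smul, one_div_mul_eq_div] at this

theorem splitH_add_inner_le {g v : X} (hHconv : ConvexOn ℝ Set.univ H)
    (hH : HasGradientAt H g v) (τ : ℝ) (a w : X) :
    splitH H τ a v + ⟪g + (2 / τ) • (v - a), w - v⟫ + (1 / τ) * ‖w - v‖ ^ 2 ≤ splitH H τ a w := by
  have hconv := hHconv.add_inner_le_of_hasGradientAt hH w
  rw [splitH, splitH, inner_add_left, real_inner_smul_left]
  linear_combination hconv - (1 / τ) * norm_sub_sq_eq_add_inner a v w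

theorem splitF_add_inner_le (hF : ∀ x, HasGradientAt F (f x) x)
    (hLip : ∀ x y, ‖f x - f y‖ ≤ L * ‖x - y‖) (τ : ℝ) (a b v w : X) :
    splitF F f τ a b v + ⟪(2 / (3 * τ)) • (v - b) - f v - (f a - f b), w - v⟫
      + (1 / (3 * τ) - L / 2) * ‖w - v‖ ^ 2 ≤ splitF F f τ a b w := by
  have hdesc := le_add_inner_add_sq_of_lipschitz_gradient hF hLip v w
  have hlin : ⟪f a - f b, w - b⟫ = ⟪f a - f b, v - b⟫ + ⟪f a - f b, w - v⟫ := by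
    rw [← inner_add_right, sub_add_sub_cancel']
  have hgrad : ⟪(2 / (3 * τ)) • (v - b) - f v - (f a - f b), w - v⟫
      = 2 / (3 * τ) * ⟪v - b, w - v⟫ - ⟪f v, w - v⟫ - ⟪f a - f b, w - v⟫ := by
    rw [inner_sub_left, inner_sub_left, real_inner_smul_left]
  rw [splitF, splitF, hgrad]
  linear_combination hdesc - (1 / (3 * τ)) * norm_sub_sq_eq_add_inner b v w + hlin

theorem splitH_sub_splitF_le_of_stationary (hHconv : ConvexOn ℝ Set.univ H)
    (hH : ∀ x, HasGradientAt H (h x) x) (hF : ∀ x, HasGradientAt F (f x) x)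
    (hLip : ∀ x y, ‖f x - f y‖ ≤ L * ‖x - y‖) {x₀ x y m : X}
    (hstat : h y + (2 / τ) • (y - x) - ((2 / (3 * τ)) • (x - x₀) - f x - (f x - f x₀)) + m = 0)
    (hm : 0 ≤ ⟪m, y - x⟫) :
    splitH H τ x y - splitF F f τ x x₀ y
      ≤ splitH H τ x x - splitF F f τ x x₀ x - (4 / (3 * τ) - L / 2) * ‖y - x‖ ^ 2 := by
  have hHy := splitH_add_inner_le hHconv (hH y) τ x x
  have hFx := splitF_add_inner_le hF hLip τ x x₀ x y
  set gH := h y + (2 / τ) • (y - x)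
  set gF := (2 / (3 * τ)) • (x - x₀) - f x - (f x - f x₀)
  clear_value gH gF
  have hgap : ⟪gH, x - y⟫ + ⟪gF, y - x⟫ = ⟪m, y - x⟫ := by
    rw [eq_neg_of_add_eq_zero_right hstat, inner_neg_left, inner_sub_left, ← neg_sub y x,
      inner_neg_right]
    ring
  rw [norm_sub_rev] at hHy
  linear_combination hHy + hFx + hm - hgap

theorem lyapunov_add_le_of_lineSearch (hHconv : ConvexOn ℝ Set.univ H)
    (hH : ∀ x, HasGradientAt H (h x) x) (hF : ∀ x, HasGradientAt F (f x) x) (hL : 0 ≤ L)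
    (hLip : ∀ x y, ‖f x - f y‖ ≤ L * ‖x - y‖) (hτ : 0 < τ) {x₀ x y m : X} {α lam lamMax : ℝ}
    (hstat : h y + (2 / τ) • (y - x) - ((2 / (3 * τ)) • (x - x₀) - f x - (f x - f x₀)) + m = 0)
    (hm : 0 ≤ ⟪m, y - x⟫) (hα : 0 ≤ α) (hlam : 0 ≤ lam) (hlamMax : lam ≤ lamMax)
    (hls : splitH H τ x (y + lam • (y - x)) - splitF F f τ x x₀ (y + lam • (y - x))
      ≤ splitH H τ x y - splitF F f τ x x₀ y - α * lam * ‖y - x‖ ^ 2) :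
    H (y + lam • (y - x)) + F (y + lam • (y - x))
        + (L / 2 + 1 / (3 * τ)) * ‖y + lam • (y - x) - x‖ ^ 2
        + (4 / (3 * τ) - L / 2 - L * (1 + lamMax) ^ 2) * ‖y - x‖ ^ 2
      ≤ H x + F x + (L / 2 + 1 / (3 * τ)) * ‖x - x₀‖ ^ 2 := by
  have hdec := splitH_sub_splitF_le_of_stationary hHconv hH hF hLip hstat hm
  have hpen : 0 ≤ α * lam * ‖y - x‖ ^ 2 := by positivity
  have hsplit : splitH H τ x (y + lam • (y - x)) - splitF F f τ x x₀ (y + lam • (y - x))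
      ≤ splitH H τ x x - splitF F f τ x x₀ x - (4 / (3 * τ) - L / 2) * ‖y - x‖ ^ 2 := by
    linarith
  have hlyap := lyapunov_add_le_of_split_le hL hτ hLip hsplit
  have hstep : ‖y + lam • (y - x) - x‖ ^ 2 ≤ (1 + lamMax) ^ 2 * ‖y - x‖ ^ 2 := by
    rw [show y + lam • (y - x) - x = (1 + lam) • (y - x) by module, norm_smul, mul_pow,
      Real.norm_of_nonneg (by linarith)]
    gcongr
  nlinarith [mul_le_mul_of_nonneg_left hstep hL]

end Splitting

theorem norm_gradient_add_le_of_stationary {X : Type*} [NormedAddCommGroup X]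
    [InnerProductSpace ℝ X] {h f : X → X} {τ L Lh : ℝ} (hhLip : ∀ x y, ‖h x - h y‖ ≤ Lh * ‖x - y‖)
    (hLip : ∀ x y, ‖f x - f y‖ ≤ L * ‖x - y‖) (hτ : 0 < τ) {x₀ x y m : X} (x' : X)
    (hstat : h y + (2 / τ) • (y - x) - ((2 / (3 * τ)) • (x - x₀) - f x - (f x - f x₀)) + m = 0) :
    ‖h x' + f x'‖ ≤ Lh * ‖x' - y‖ + L * ‖x' - x‖ + (2 / (3 * τ) + L) * ‖x - x₀‖ + ‖m‖
      + 2 / τ * ‖y - x‖ := by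
  have hsplit : h x' + f x' = (h x' - h y) + (f x' - f x) + ((2 / (3 * τ)) • (x - x₀)
      - (f x - f x₀)) - m - (2 / τ) • (y - x) := by
    rw [← sub_eq_zero, ← hstat]
    abel
  rw [hsplit]
  have hx₀ : ‖(2 / (3 * τ)) • (x - x₀) - (f x - f x₀)‖ ≤ (2 / (3 * τ) + L) * ‖x - x₀‖ := by
    grw [norm_sub_le, norm_smul, hLip, Real.norm_of_nonneg (by positivity)]
    linarith
  grw [norm_sub_le, norm_sub_le, norm_add_le, norm_add_le, hhLip, hLip, hx₀, norm_smul,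
    Real.norm_of_nonneg (by positivity : (0 : ℝ) ≤ 2 / τ)]

theorem sub_sub_mul_sq_pos_of_lt_sqrt_sub_one {τ L μ : ℝ} (hL : 0 < L) (hμ : 0 ≤ μ)
    (hlt : μ < √(4 / (3 * τ * L) - 1 / 2) - 1) : 0 < 4 / (3 * τ) - L / 2 - L * (1 + μ) ^ 2 := by
  have hsq := mul_lt_mul_of_pos_left ((Real.lt_sqrt (by linarith)).1 (by linarith : 1 + μ < _)) hL
  rw [mul_sub, show L * (4 / (3 * τ * L)) = 4 / (3 * τ) by field_simp] at hsq
  linarith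

/-- `u (n - 1)` uses truncated subtraction, which encodes the convention `u⁻¹ = u⁰`. -/
theorem gradient_A_tendsto_zero_un_general
    {X : Type*} [NormedAddCommGroup X] [InnerProductSpace ℝ X] [FiniteDimensional ℝ X]
    (H : X → ℝ) (h : X → X) (hH : ∀ x : X, HasGradientAt H (h x) x)
    (hHconv : ConvexOn ℝ Set.univ H)
    (F : X → ℝ) (f : X → X) (hF : ∀ x : X, HasGradientAt F (f x) x)
    (L : ℝ) (hL : 0 < L) (hLip : ∀ x y : X, ‖f x - f y‖ ≤ L * ‖x - y‖)
    (Lh : ℝ) (hhLip : ∀ x y : X, ‖h x - h y‖ ≤ Lh * ‖x - y‖)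
    (δt : ℝ) (hδt : 0 < δt)
    (M : X →L[ℝ] X)
    (hMpsd : ∀ x : X, 0 ≤ ⟪M x, x⟫)
    (u y : ℕ → X) (lam : ℕ → ℝ) (α : ℝ) (hα : 0 < α)
    (Hn Fn En : ℕ → X → ℝ)
    (hHn : ∀ n : ℕ, ∀ v : X, Hn n v = H v + (1 / δt) * ‖v - u n‖ ^ 2)
    (hFn : ∀ n : ℕ, ∀ v : X, Fn n v = (1 / (3 * δt)) * ‖v - u (n - 1)‖ ^ 2 - F v
      - ⟪f (u n) - f (u (n - 1)), v - u (n - 1)⟫)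
    (hEn : ∀ n : ℕ, ∀ v : X, En n v = Hn n v - Fn n v)
    (hopt : ∀ n : ℕ, gradient (Hn n) (y n) - gradient (Fn n) (u n) + M (y n - u n) = 0)
    (hlam0 : ∀ n : ℕ, 0 ≤ lam n)
    (hls : ∀ n : ℕ, En n (y n + lam n • (y n - u n))
      ≤ En n (y n) - α * lam n * ‖y n - u n‖ ^ 2)
    (hupd : ∀ n : ℕ, u (n + 1) = y n + lam n • (y n - u n))
    (E : X → ℝ) (hE : ∀ v : X, E v = H v + F v)
    (hEbdd : BddBelow (Set.range E))
    (lamMax : ℝ) (hlamMax : ∀ n : ℕ, lam n ≤ lamMax)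
    (hlamBound : lamMax < Real.sqrt (4 / (3 * δt * L) - 1 / 2) - 1)
    (Afun : WithLp 2 (X × X) → ℝ)
    (hAfun : ∀ p : WithLp 2 (X × X),
      Afun p = E (WithLp.equiv 2 (X × X) p).1
        + (L / 2 + 1 / (3 * δt))
          * ‖(WithLp.equiv 2 (X × X) p).1 - (WithLp.equiv 2 (X × X) p).2‖ ^ 2) :
    Tendsto (fun n : ℕ =>
        ‖gradient Afun ((WithLp.equiv 2 (X × X)).symm (u (n + 1), u n))‖)
      atTop (𝓝 0) := by
  set c := L / 2 + 1 / (3 * δt)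
  have hHn' (n : ℕ) : Hn n = splitH H δt (u n) := funext (hHn n)
  have hFn' (n : ℕ) : Fn n = splitF F f δt (u n) (u (n - 1)) := funext (hFn n)
  have hstat (n : ℕ) : h (y n) + (2 / δt) • (y n - u n) - ((2 / (3 * δt)) • (u n - u (n - 1))
      - f (u n) - (f (u n) - f (u (n - 1)))) + M (y n - u n) = 0 := by
    simpa only [hHn', hFn', (hasGradientAt_splitH (hH _) _ _).gradient,
      (hasGradientAt_splitF (hF _) _ _ _ _).gradient] using hopt n
  set V : ℕ → ℝ := fun n => E (u n) + c * ‖u n - u (n - 1)‖ ^ 2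
  have hdesc (n : ℕ) : V (n + 1) + (4 / (3 * δt) - L / 2 - L * (1 + lamMax) ^ 2)
      * ‖y n - u n‖ ^ 2 ≤ V n := by
    have := lyapunov_add_le_of_lineSearch hHconv hH hF hL.le hLip hδt (hstat n) (hMpsd _) hα.le
      (hlam0 n) (hlamMax n) (by simpa only [hEn, hHn', hFn'] using hls n)
    simpa only [V, hE, ← hupd n, Nat.add_sub_cancel] using this
  obtain ⟨m, hm⟩ := hEbdd
  have hVbdd : BddBelow (Set.range V) := ⟨m, Set.forall_mem_range.2 fun n =>
    (hm ⟨u n, rfl⟩).trans (le_add_of_nonneg_right (by positivity))⟩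
  have hd := tendsto_zero_of_add_mul_sq_le
    (sub_sub_mul_sq_pos_of_lt_sqrt_sub_one hL ((hlam0 0).trans (hlamMax 0)) hlamBound)
    hdesc hVbdd
  have hs : Tendsto (fun n => ‖u (n + 1) - u n‖) atTop (𝓝 0) := by
    have hstep (n : ℕ) : u (n + 1) - u n = (1 + lam n) • (y n - u n) := by rw [hupd n]; module
    simpa only [hstep] using tendsto_norm_smul_zero (c := fun n => 1 + lam n)
      (fun n => by linarith [hlam0 n]) (fun n => by linarith [hlamMax n]) hd
  have hq : Tendsto (fun n => ‖u (n + 1) - y n‖) atTop (𝓝 0) := by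
    simpa only [hupd, add_sub_cancel_left] using tendsto_norm_smul_zero hlam0 hlamMax hd
  have hp : Tendsto (fun n => ‖u n - u (n - 1)‖) atTop (𝓝 0) :=
    (tendsto_add_atTop_iff_nat 1).1 (by simpa using hs)
  have hgradE (v : X) : HasGradientAt E (h v + f v) v := by
    simpa only [← hE] using (hH v).add (hF v)
  refine squeeze_zero (fun n => norm_nonneg _) (fun n => ?_)
    (by simpa using ((((((hq.const_mul Lh).add (hs.const_mul L)).add
      (hp.const_mul (2 / (3 * δt) + L))).add (hd.const_mul ‖M‖)).add
      (hd.const_mul (2 / δt))).add (hs.const_mul (4 * c))))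
  rw [show Afun = _ from funext hAfun]
  refine (norm_gradient_fst_add_norm_fst_sub_snd_sq_le (hgradE _) (by positivity) _).trans ?_
  grw [norm_gradient_add_le_of_stationary hhLip hLip hδt _ (hstat n), M.le_opNorm]

/-- Vanishing of the gradient of the auxiliary function
`A(x,y) = E(x) + (L/2 + 1/(3δt))‖x - y‖²` along the iterates of the algorithm with
`ûⁿ = uⁿ` (the convention `u⁻¹ = u⁰` is encoded by ℕ-subtraction in `u (n-1)`). -/
theorem gradient_A_tendsto_zero_un
    {X : Type*} [NormedAddCommGroup X] [InnerProductSpace ℝ X] [FiniteDimensional ℝ X]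
    (H : X → ℝ) (h : X → X) (hH : ∀ x : X, HasGradientAt H (h x) x)
    (hHconv : ConvexOn ℝ Set.univ H)
    (F : X → ℝ) (f : X → X) (hF : ∀ x : X, HasGradientAt F (f x) x)
    (L : ℝ) (hL : 0 < L) (hLip : ∀ x y : X, ‖f x - f y‖ ≤ L * ‖x - y‖)
    (Lh : ℝ) (hLh : 0 ≤ Lh) (hhLip : ∀ x y : X, ‖h x - h y‖ ≤ Lh * ‖x - y‖)
    (δt : ℝ) (hδt : 0 < δt) (hδt2 : δt < 2 / (3 * L))
    (M : X →L[ℝ] X) (hMsym : ∀ x y : X, ⟪M x, y⟫ = ⟪x, M y⟫)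
    (hMpsd : ∀ x : X, 0 ≤ ⟪M x, x⟫)
    (u y : ℕ → X) (lam : ℕ → ℝ) (α : ℝ) (hα : 0 < α)
    (Hn Fn En : ℕ → X → ℝ)
    (hHn : ∀ n : ℕ, ∀ v : X, Hn n v = H v + (1 / δt) * ‖v - u n‖ ^ 2)
    (hFn : ∀ n : ℕ, ∀ v : X, Fn n v = (1 / (3 * δt)) * ‖v - u (n - 1)‖ ^ 2 - F v
      - ⟪f (u n) - f (u (n - 1)), v - u (n - 1)⟫)
    (hEn : ∀ n : ℕ, ∀ v : X, En n v = Hn n v - Fn n v)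
    (hopt : ∀ n : ℕ, gradient (Hn n) (y n) - gradient (Fn n) (u n) + M (y n - u n) = 0)
    (hlam0 : ∀ n : ℕ, 0 ≤ lam n)
    (hls : ∀ n : ℕ, En n (y n + lam n • (y n - u n))
      ≤ En n (y n) - α * lam n * ‖y n - u n‖ ^ 2)
    (hupd : ∀ n : ℕ, u (n + 1) = y n + lam n • (y n - u n))
    (E : X → ℝ) (hE : ∀ v : X, E v = H v + F v)
    (hEbdd : BddBelow (Set.range E))
    (lamMax : ℝ) (hlamMax : ∀ n : ℕ, lam n ≤ lamMax)
    (hlamBound : lamMax < Real.sqrt (4 / (3 * δt * L) - 1 / 2) - 1)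
    (Afun : WithLp 2 (X × X) → ℝ)
    (hAfun : ∀ p : WithLp 2 (X × X),
      Afun p = E (WithLp.equiv 2 (X × X) p).1
        + (L / 2 + 1 / (3 * δt))
          * ‖(WithLp.equiv 2 (X × X) p).1 - (WithLp.equiv 2 (X × X) p).2‖ ^ 2) :
    Tendsto (fun n : ℕ =>
        ‖gradient Afun ((WithLp.equiv 2 (X × X)).symm (u (n + 1), u n))‖)
      atTop (𝓝 0) :=
  gradient_A_tendsto_zero_un_general H h hH hHconv F f hF L hL hLip Lh hhLip δt hδt M hMpsd u y lam
    α hα Hn Fn En hHn hFn hEn hopt hlam0 hls hupd E hE hEbdd lamMax hlamMax hlamBound Afun hAfun
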